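/- Let ω ∈ {0,1}^ℕ be a computable path (as a map ℕ → {0,1}, in Mathlib's sense of computability) that has infinitely many zeroes and infinitely many ones. Then the only interval forecast I for which ω is Schnorr random for the stationary forecasting system Γ_I is I = [0,1]; in particular, the only interval forecast for which ω is computably random is [0,1]. -/

import Mathlib

open Filter

noncomputable section

/-- Situations: finite binary strings. -/
abbrev Situation : Type := List Bool

/-- Paths: infinite binary sequences. -/
abbrev BitPath : Type := ℕ → Bool

/-- The first `n` outcomes of a path. -/
def pref (ω : BitPath) (n : ℕ) : Situation := (List.range n).map ω

/-- The real value of a bit. -/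
def bval (b : Bool) : ℝ := if b then 1 else 0

/-- Precise expectation of a gamble on `{0,1}` with respect to a forecast `p`. -/
def Ep (p : ℝ) (f : Bool → ℝ) : ℝ := p * f true + (1 - p) * f false

/-- Interval forecast: a nonempty closed subinterval of `[0,1]`. -/
def IsForecast (I : Set ℝ) : Prop :=
  ∃ l u : ℝ, 0 ≤ l ∧ l ≤ u ∧ u ≤ 1 ∧ I = Set.Icc l u

/-- Upper expectation associated with an interval forecast. -/
def upperExp (I : Set ℝ) (f : Bool → ℝ) : ℝ := sSup ((fun p => Ep p f) '' I)

/-- Lower expectation associated with an interval forecast. -/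
def lowerExp (I : Set ℝ) (f : Bool → ℝ) : ℝ := sInf ((fun p => Ep p f) '' I)

/-- Forecasting systems. -/
abbrev ForecastingSystem : Type := Situation → Set ℝ

def IsForecastingSystem (Γ : ForecastingSystem) : Prop := ∀ s, IsForecast (Γ s)

/-- Supermartingale for a forecasting system. -/
def Supermartingale (Γ : ForecastingSystem) (M : Situation → ℝ) : Prop :=
  ∀ s : Situation, upperExp (Γ s) (fun x => M (s ++ [x]) - M s) ≤ 0

/-- Submartingale for a forecasting system. -/
def Submartingale (Γ : ForecastingSystem) (M : Situation → ℝ) : Prop :=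
  ∀ s : Situation, 0 ≤ lowerExp (Γ s) (fun x => M (s ++ [x]) - M s)

/-- Test process: nonnegative with unit initial value. -/
def TestProcess (M : Situation → ℝ) : Prop := (∀ s, 0 ≤ M s) ∧ M [] = 1

/-- Test supermartingale. -/
def TestSupermartingale (Γ : ForecastingSystem) (M : Situation → ℝ) : Prop :=
  TestProcess M ∧ Supermartingale Γ M

/-- Computable real process. -/
def ComputableProcess (F : Situation → ℝ) : Prop :=
  ∃ r : Situation × ℕ → ℚ, ∃ e : Situation × ℕ → ℕ,
    Computable r ∧ Computable e ∧
    ∀ s n N, e (s, N) ≤ n → |(r (s, n) : ℝ) - F s| ≤ (2 : ℝ) ^ (-(N : ℤ))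

/-- Lower semicomputable real process. -/
def LowerSemicomputableProcess (F : Situation → ℝ) : Prop :=
  ∃ r : Situation × ℕ → ℚ, Computable r ∧
    (∀ s n, r (s, n) ≤ r (s, n + 1)) ∧
    ∀ s, Filter.Tendsto (fun n => (r (s, n) : ℝ)) Filter.atTop (nhds (F s))

def UpperSemicomputableProcess (F : Situation → ℝ) : Prop :=
  LowerSemicomputableProcess (fun s => -F s)

def ComputableReal (x : ℝ) : Prop := ComputableProcess (fun _ => x)
def LowerSemicomputableReal (x : ℝ) : Prop := LowerSemicomputableProcess (fun _ => x)
def UpperSemicomputableReal (x : ℝ) : Prop := UpperSemicomputableProcess (fun _ => x)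

/-- Computable real sequence. -/
def ComputableSeq (τ : ℕ → ℝ) : Prop :=
  ∃ r : ℕ × ℕ → ℚ, ∃ e : ℕ × ℕ → ℕ,
    Computable r ∧ Computable e ∧
    ∀ k n N, e (k, N) ≤ n → |(r (k, n) : ℝ) - τ k| ≤ (2 : ℝ) ^ (-(N : ℤ))

/-- Computable forecasting system. -/
def ComputableForecastingSystem (Γ : ForecastingSystem) : Prop :=
  ComputableProcess (fun s => sInf (Γ s)) ∧ ComputableProcess (fun s => sSup (Γ s))

/-- Growth function: computable, nondecreasing and unbounded. -/
def GrowthFunction (ρ : ℕ → ℕ) : Prop :=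
  Computable ρ ∧ Monotone ρ ∧ ∀ m : ℕ, ∃ n, m < ρ n

/-- Real growth function: computable, nondecreasing, nonnegative and unbounded. -/
def RealGrowthFunction (τ : ℕ → ℝ) : Prop :=
  ComputableSeq τ ∧ Monotone τ ∧ (∀ n, 0 ≤ τ n) ∧ ∀ B : ℝ, ∃ n, B < τ n

/-- Computably unbounded real-valued map. -/
def ComputablyUnbounded (μ : ℕ → ℝ) : Prop :=
  ∃ ρ : ℕ → ℕ, GrowthFunction ρ ∧
    (0 : EReal) < Filter.limsup (fun n => ((μ n - (ρ n : ℝ) : ℝ) : EReal)) Filter.atTop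

def ComputablyUnboundedOn (T : Situation → ℝ) (ω : BitPath) : Prop :=
  ComputablyUnbounded (fun n => T (pref ω n))

def BoundedAboveOn (T : Situation → ℝ) (ω : BitPath) : Prop :=
  ∃ B : ℝ, ∀ n, T (pref ω n) ≤ B

/-- Schnorr randomness of a path for a forecasting system. -/
def SchnorrRandom (ω : BitPath) (Γ : ForecastingSystem) : Prop :=
  ∀ T : Situation → ℝ, ComputableProcess T → TestSupermartingale Γ T →
    ¬ ComputablyUnboundedOn T ω

/-- Computable randomness of a path for a forecasting system. -/
def ComputablyRandom (ω : BitPath) (Γ : ForecastingSystem) : Prop :=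
  ∀ T : Situation → ℝ, ComputableProcess T → TestSupermartingale Γ T →
    BoundedAboveOn T ω

/-- Global upper expectation. -/
def upperExpGlobal (Γ : ForecastingSystem) (g : BitPath → ℝ) : ℝ :=
  sInf {x : ℝ | ∃ M : Situation → ℝ, Supermartingale Γ M ∧ x = M [] ∧
    ∀ ω : BitPath, (g ω : EReal) ≤
      Filter.liminf (fun n => ((M (pref ω n) : ℝ) : EReal)) Filter.atTop}

/-- Global lower expectation. -/
def lowerExpGlobal (Γ : ForecastingSystem) (g : BitPath → ℝ) : ℝ :=
  sSup {x : ℝ | ∃ M : Situation → ℝ, Submartingale Γ M ∧ x = M [] ∧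
    ∀ ω : BitPath,
      Filter.limsup (fun n => ((M (pref ω n) : ℝ) : EReal)) Filter.atTop ≤ (g ω : EReal)}

/-- Global upper probability. -/
def upperProb (Γ : ForecastingSystem) (A : Set BitPath) : ℝ :=
  upperExpGlobal Γ (Set.indicator A fun _ => 1)

/-- Number of selected situations along (the prefixes of) a situation. -/
def selSum (S : Situation → Bool) (s : Situation) : ℝ :=
  ∑ k ∈ Finset.range s.length, bval (S (s.take k))

/-- Selected average of process differences along a situation. -/
def selAvg (S : Situation → Bool) (M : Situation → ℝ) (s : Situation) : ℝ :=
  if 0 < selSum S s then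
    (∑ k ∈ Finset.range s.length,
      bval (S (s.take k)) * (M (s.take (k + 1)) - M (s.take k))) / selSum S s
  else 0

/-- Cylinder set of a situation. -/
def cyl (t : Situation) : Set BitPath := {ω | pref ω t.length = t}

/-- Lawful path. -/
def Lawful (ω : BitPath) : Prop :=
  ∃ R : Situation →. List Situation, Partrec R ∧
    ∀ m : ℕ, ∃ L : List Situation, L ∈ R (pref ω m) ∧
      L ≠ [] ∧
      (∀ t ∈ L, pref ω m <+: t ∧ pref ω m ≠ t) ∧
      ((⋃ t ∈ L, cyl t) ⊂ cyl (pref ω m)) ∧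
      ∃ t ∈ L, ω ∈ cyl t

/-!
If the forecast `[l, u]` is not `[0, 1]`, then `0 < l` or `u < 1`, so some outcome `b` has
probability at most `c < 1` under every `p ∈ [l, u]`. A gambler who knows the computable path `ω`
stakes `G` units to win one unit on `b` exactly when `ω` is about to produce `b`; once
`c (G + 1) ≤ G` this is a supermartingale for `[l, u]`. Along `ω` such bets are never lost, and
one is won at each of the infinitely many occurrences of `b`, so the capital outgrows a
computable growth function. Conversely, every supermartingale for `[0, 1]` is nonincreasing
(take `p = 0` and `p = 1`), hence bounded by its initial value along every path.
-/

theorem Primrec.nat_dvd : PrimrecRel ((· ∣ ·) : ℕ → ℕ → Prop) :=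
  (Primrec.eq.comp (Primrec.nat_mod.comp Primrec.snd Primrec.fst) (Primrec.const 0)).of_eq
    fun _ => Nat.dvd_iff_mod_eq_zero.symm

theorem Nat.gcd_eq_findGreatest (a b : ℕ) :
    a.gcd b = Nat.findGreatest (fun k => k ∣ a ∧ k ∣ b) (a + b) := by
  symm
  rw [Nat.findGreatest_eq_iff]
  refine ⟨?_, fun _ => ⟨Nat.gcd_dvd_left a b, Nat.gcd_dvd_right a b⟩, ?_⟩
  · rcases Nat.eq_zero_or_pos a with rfl | ha
    · simp
    · exact (Nat.gcd_le_left b ha).trans (Nat.le_add_right a b)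
  · rintro n hlt hle ⟨hna, hnb⟩
    rcases Nat.eq_zero_or_pos (a.gcd b) with h0 | hpos
    · obtain ⟨rfl, rfl⟩ := Nat.gcd_eq_zero_iff.1 h0
      omega
    · exact absurd (Nat.le_of_dvd hpos (Nat.dvd_gcd hna hnb)) (not_le.2 hlt)

theorem Primrec.nat_gcd : Primrec₂ Nat.gcd :=
  (Primrec.nat_findGreatest (p := fun (x : ℕ × ℕ) k => k ∣ x.1 ∧ k ∣ x.2) Primrec.nat_add
    ((Primrec.nat_dvd.comp Primrec.snd (Primrec.fst.comp Primrec.fst)).and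
      (Primrec.nat_dvd.comp Primrec.snd (Primrec.snd.comp Primrec.fst)))).of_eq
    fun p => (Nat.gcd_eq_findGreatest p.1 p.2).symm

theorem Rat.encode_eq_pair (q : ℚ) :
    @Encodable.encode ℚ Rat.instEncodable q = Nat.pair (Equiv.intEquivNat q.num) q.den := rfl

theorem Int.natAbs_intEquivNat_symm (n : ℕ) :
    (Equiv.intEquivNat.symm n).natAbs = (n + 1) / 2 := by
  obtain ⟨z, rfl⟩ := Equiv.intEquivNat.surjective n
  rw [Equiv.symm_apply_apply]
  rcases z with k | k
  · show k = (2 * k + 1) / 2; omega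
  · show k + 1 = (2 * k + 1 + 1) / 2; omega

theorem Rat.mem_range_encode_iff (j : ℕ) :
    j ∈ Set.range (@Encodable.encode ℚ Rat.instEncodable) ↔
      0 < j.unpair.2 ∧ Nat.Coprime ((j.unpair.1 + 1) / 2) j.unpair.2 := by
  constructor
  · rintro ⟨q, rfl⟩
    rw [Rat.encode_eq_pair, Nat.unpair_pair, ← Int.natAbs_intEquivNat_symm,
      Equiv.symm_apply_apply]
    exact ⟨q.den_pos, q.reduced⟩
  · rintro ⟨hd, hcop⟩
    rw [← Int.natAbs_intEquivNat_symm] at hcop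
    refine ⟨⟨Equiv.intEquivNat.symm j.unpair.1, j.unpair.2, hd.ne', hcop⟩, ?_⟩
    rw [Rat.encode_eq_pair]
    simp

/-- `Primcodable ℚ` comes from `Denumerable ℚ`, which renumbers the codes of `Rat.instEncodable`
by counting the valid codes below them. -/
theorem Primrec.rat_of_encode {α : Type*} [Primcodable α] {f : α → ℚ}
    (hf : Primrec fun a => @Encodable.encode ℚ Rat.instEncodable (f a)) : Primrec f := by
  have hrange : PrimrecPred (· ∈ Set.range (@Encodable.encode ℚ Rat.instEncodable)) :=
    ((Primrec.nat_lt.comp (Primrec.const 0) (Primrec.snd.comp Primrec.unpair)).and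
      (Primrec.eq.comp (Primrec.nat_gcd.comp
        (Primrec.nat_div.comp (Primrec.succ.comp (Primrec.fst.comp Primrec.unpair))
          (Primrec.const 2)) (Primrec.snd.comp Primrec.unpair)) (Primrec.const 1))).of_eq
      fun j => (Rat.mem_range_encode_iff j).symm
  let _ := @Encodable.decidableRangeEncode ℚ Rat.instEncodable
  refine Primrec.encode_iff.1 ((Primrec.list_length.comp
    ((Primrec.listFilter hrange).comp (Primrec.list_range.comp hf))).of_eq fun a => ?_)
  rw [← List.countP_eq_length_filter]
  rfl

theorem Rat.encode_natCast_div (m d : ℕ) :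
    @Encodable.encode ℚ Rat.instEncodable ((m : ℚ) / d) =
      if d = 0 then Nat.pair 0 1 else Nat.pair (2 * (m / d.gcd m)) (d / d.gcd m) := by
  have hmk : ((m : ℚ) / d) = mkRat m d := by rw [Rat.mkRat_eq_div, Int.cast_natCast]
  rw [Rat.encode_eq_pair, hmk, Rat.num_mkRat, Rat.den_mkRat, Int.natAbs_natCast]
  split_ifs
  · rfl
  · rw [← Int.natCast_div]; rfl

theorem Primrec.rat_natCast_div : Primrec₂ fun m d : ℕ => (m : ℚ) / d := by
  have hgcd : Primrec fun p : ℕ × ℕ => p.2.gcd p.1 :=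
    Primrec.nat_gcd.comp Primrec.snd Primrec.fst
  refine Primrec.rat_of_encode (Primrec.ite (Primrec.eq.comp Primrec.snd (Primrec.const 0))
    (Primrec.const _) (Primrec₂.natPair.comp ?_ ?_) |>.of_eq fun p =>
      (Rat.encode_natCast_div p.1 p.2).symm)
  · exact Primrec.nat_mul.comp (Primrec.const 2)
      (Primrec.nat_div.comp Primrec.fst hgcd)
  · exact Primrec.nat_div.comp Primrec.snd hgcd

theorem computableProcess_natCast_div {c : Situation → ℕ} (hc : Computable c) (d : ℕ) :
    ComputableProcess fun s => (c s : ℝ) / d := by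
  refine ⟨fun p => (c p.1 : ℚ) / d, fun _ => 0,
    Primrec.rat_natCast_div.to_comp.comp (hc.comp Computable.fst) (Computable.const d),
    Computable.const 0, fun s n N _ => ?_⟩
  push_cast
  rw [sub_self, abs_zero]
  positivity

theorem Computable.ite {α σ : Type*} [Primcodable α] [Primcodable σ] {c : α → Prop}
    [DecidablePred c] {f g : α → σ} (hc : Computable fun a => decide (c a))
    (hf : Computable f) (hg : Computable g) :
    Computable fun a => if c a then f a else g a :=
  (Computable.cond hc hf hg).of_eq fun a => by by_cases h : c a <;> simp [h]

theorem pref_length (ω : BitPath) (n : ℕ) : (pref ω n).length = n := by simp [pref]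

theorem pref_succ (ω : BitPath) (n : ℕ) : pref ω (n + 1) = pref ω n ++ [ω n] := by
  simp [pref, List.range_succ]

theorem computable_pref {ω : BitPath} (hω : Computable ω) : Computable (pref ω) := by
  refine (Computable.nat_rec (σ := Situation) Computable.id (Computable.const [])
    (Computable.list_concat.comp (Computable.snd.comp Computable.snd)
      (hω.comp (Computable.fst.comp Computable.snd))).to₂).of_eq fun n => ?_
  dsimp only [id]
  induction n with
  | zero => rfl
  | succ n ih => rw [pref_succ, ← ih]

theorem computablyUnbounded_of_add_one_le {μ : ℕ → ℝ} {ρ : ℕ → ℕ} (hρ : GrowthFunction ρ)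
    (h : ∀ n, (ρ n : ℝ) + 1 ≤ μ n) : ComputablyUnbounded μ := by
  refine ⟨ρ, hρ, lt_of_lt_of_le zero_lt_one (le_limsup_of_frequently_le
    (Frequently.of_forall fun n => ?_) (by isBoundedDefault))⟩
  exact_mod_cast (le_sub_iff_add_le'.2 (h n))

def probOf (p : ℝ) (b : Bool) : ℝ := if b then p else 1 - p

theorem Ep_eq (p : ℝ) (f : Bool → ℝ) (b : Bool) :
    Ep p f = probOf p b * f b + (1 - probOf p b) * f (!b) := by
  cases b <;> simp only [Ep, probOf, Bool.not_false, Bool.not_true, if_true,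
    Bool.false_eq_true, if_false]
  all_goals ring

theorem Ep_bval (x : Bool) (f : Bool → ℝ) : Ep (bval x) f = f x := by
  cases x <;> simp [Ep, bval]

theorem Ep_le_upperExp {I : Set ℝ} (hI : IsCompact I) {p : ℝ} (hp : p ∈ I) (f : Bool → ℝ) :
    Ep p f ≤ upperExp I f :=
  le_csSup (hI.image (by unfold Ep; fun_prop)).bddAbove ⟨p, hp, rfl⟩

section Betting

variable (ω : BitPath) (b : Bool) (G : ℕ)

def betStep (k : ℕ) (x : Bool) (m : ℕ) : ℕ :=
  if ω k = b ∧ G ≤ m then (if x = b then m + 1 else m - G) else m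

def capitalUpTo (s : Situation) : ℕ → ℕ
  | 0 => G + 1
  | k + 1 => betStep ω b G k (s.getD k false) (capitalUpTo s k)

def capital (s : Situation) : ℕ := capitalUpTo ω b G s s.length

def bettingProcess (s : Situation) : ℝ := (capital ω b G s : ℝ) / (G + 1)

theorem capitalUpTo_append (s : Situation) (x : Bool) :
    ∀ k ≤ s.length, capitalUpTo ω b G (s ++ [x]) k = capitalUpTo ω b G s k
  | 0, _ => rfl
  | k + 1, hk => by
    rw [capitalUpTo, capitalUpTo, capitalUpTo_append s x k (by omega),
      List.getD_append _ _ _ _ hk]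

theorem capital_append (s : Situation) (x : Bool) :
    capital ω b G (s ++ [x]) = betStep ω b G s.length x (capital ω b G s) := by
  rw [capital, List.length_append, List.length_singleton, capitalUpTo,
    capitalUpTo_append ω b G s x _ le_rfl, List.getD_append_right _ _ _ _ le_rfl,
    Nat.sub_self, List.getD_cons_zero, capital]

theorem computable_capital (hω : Computable ω) :
    Computable (capital ω b G) := by
  have hstep : Computable fun p : Situation × (ℕ × ℕ) =>
      betStep ω b G p.2.1 (p.1.getD p.2.1 false) p.2.2 := by
    have hk : Computable fun p : Situation × (ℕ × ℕ) => p.2.1 :=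
      Computable.fst.comp Computable.snd
    have hm : Computable fun p : Situation × (ℕ × ℕ) => p.2.2 :=
      Computable.snd.comp Computable.snd
    have hbit {f : Situation × (ℕ × ℕ) → Bool} (hf : Computable f) :
        Computable fun p => decide (f p = b) :=
      (Primrec.dom_finite fun x : Bool => decide (x = b)).to_comp.comp hf
    have hbet : Computable fun p : Situation × (ℕ × ℕ) => decide (ω p.2.1 = b ∧ G ≤ p.2.2) :=
      (Primrec.and.to_comp.comp (hbit (hω.comp hk))
        (Primrec.nat_le.decide.to_comp.comp (Computable.const G) hm)).of_eq
        fun p => (Bool.decide_and _ _).symm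
    exact Computable.ite hbet
      (Computable.ite (hbit ((Primrec.list_getD false).to_comp.comp Computable.fst hk))
        (Computable.succ.comp hm) (Primrec.nat_sub.to_comp.comp hm (Computable.const G))) hm
  refine (Computable.nat_rec Computable.list_length (Computable.const (G + 1))
    hstep.to₂).of_eq fun s => ?_
  show _ = capitalUpTo ω b G s s.length
  induction s.length with
  | zero => rfl
  | succ k ih => rw [capitalUpTo, ← ih]

theorem computableProcess_bettingProcess (hω : Computable ω) :
    ComputableProcess (bettingProcess ω b G) := by
  have h := computableProcess_natCast_div (computable_capital ω b G hω) (G + 1)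
  push_cast at h
  exact h

theorem testProcess_bettingProcess : TestProcess (bettingProcess ω b G) :=
  ⟨fun _ => by unfold bettingProcess; positivity,
    by
      rw [bettingProcess, capital, List.length_nil, capitalUpTo]
      push_cast
      exact div_self (by positivity)⟩

theorem supermartingale_bettingProcess {I : Set ℝ}
    (hI : ∀ p ∈ I, probOf p b * (G + 1) ≤ G) :
    Supermartingale (fun _ => I) (bettingProcess ω b G) := by
  intro s
  refine Real.sSup_le ?_ le_rfl
  rintro _ ⟨p, hp, rfl⟩
  dsimp only
  rw [Ep_eq p _ b]
  by_cases hbet : ω s.length = b ∧ G ≤ capital ω b G s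
  · simp only [bettingProcess, capital_append, betStep, if_pos hbet,
      if_neg (Bool.not_ne_self b)]
    have hG : (0 : ℝ) < G + 1 := by positivity
    calc _ = (probOf p b * (G + 1) - G) / (G + 1) := by
            push_cast [Nat.cast_sub hbet.2]; field_simp; ring
      _ ≤ 0 := div_nonpos_of_nonpos_of_nonneg (by linarith [hI p hp]) hG.le
  · simp [bettingProcess, capital_append, betStep, if_neg hbet]

theorem capital_pref_succ (n : ℕ) :
    capital ω b G (pref ω (n + 1)) =
      if ω n = b ∧ G ≤ capital ω b G (pref ω n) then capital ω b G (pref ω n) + 1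
      else capital ω b G (pref ω n) := by
  rw [pref_succ, capital_append, pref_length, betStep]
  split_ifs with h <;> simp_all

theorem monotone_capital_pref : Monotone fun n => capital ω b G (pref ω n) :=
  monotone_nat_of_le_succ fun n => by rw [capital_pref_succ]; split_ifs <;> omega

theorem le_capital_pref (n : ℕ) : G + 1 ≤ capital ω b G (pref ω n) :=
  monotone_capital_pref ω b G (Nat.zero_le n)

theorem exists_le_capital_pref (hb : ∀ m : ℕ, ∃ n, m ≤ n ∧ ω n = b) (m : ℕ) :
    ∃ n, m ≤ capital ω b G (pref ω n) := by
  induction m with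
  | zero => exact ⟨0, Nat.zero_le _⟩
  | succ m ih =>
    obtain ⟨n, hn⟩ := ih
    obtain ⟨k, hnk, hk⟩ := hb n
    refine ⟨k + 1, ?_⟩
    rw [capital_pref_succ, if_pos ⟨hk, by linarith [le_capital_pref ω b G k]⟩]
    linarith [monotone_capital_pref ω b G hnk]

theorem computablyUnboundedOn_bettingProcess (hω : Computable ω)
    (hb : ∀ m : ℕ, ∃ n, m ≤ n ∧ ω n = b) :
    ComputablyUnboundedOn (bettingProcess ω b G) ω := by
  set ρ : ℕ → ℕ := fun n => capital ω b G (pref ω n) / (G + 1) - 1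
  refine computablyUnbounded_of_add_one_le (ρ := ρ) ⟨?_, ?_, fun m => ?_⟩ fun n => ?_
  · exact Primrec.nat_sub.to_comp.comp (Primrec.nat_div.to_comp.comp
      ((computable_capital ω b G hω).comp (computable_pref hω)) (Computable.const _))
      (Computable.const 1)
  · exact fun m n hmn => Nat.sub_le_sub_right
      (Nat.div_le_div_right (monotone_capital_pref ω b G hmn)) 1
  · obtain ⟨n, hn⟩ := exists_le_capital_pref ω b G hb ((m + 2) * (G + 1))
    have := (Nat.le_div_iff_mul_le (by omega : 0 < G + 1)).2 hn
    exact ⟨n, by simp only [ρ]; omega⟩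
  · have h1 : 1 ≤ capital ω b G (pref ω n) / (G + 1) :=
      (Nat.le_div_iff_mul_le (by omega : 0 < G + 1)).2 (by simpa using le_capital_pref ω b G n)
    calc (ρ n : ℝ) + 1 = ((capital ω b G (pref ω n) / (G + 1) : ℕ) : ℝ) := by
          rw [Nat.cast_sub h1]; push_cast; ring
      _ ≤ bettingProcess ω b G (pref ω n) := by
          rw [bettingProcess]; exact_mod_cast Nat.cast_div_le

end Betting

theorem exists_nat_probOf_mul_le {I : Set ℝ} {b : Bool} {c : ℝ} (hc : c < 1)
    (hI : ∀ p ∈ I, probOf p b ≤ c) : ∃ G : ℕ, ∀ p ∈ I, probOf p b * (G + 1) ≤ G := by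
  obtain ⟨G, hG⟩ := exists_nat_ge (c / (1 - c))
  have hcG : c ≤ G * (1 - c) := (div_le_iff₀ (by linarith)).1 hG
  refine ⟨G, fun p hp => ?_⟩
  nlinarith [mul_le_mul_of_nonneg_right (hI p hp) (by positivity : (0 : ℝ) ≤ G + 1)]

theorem not_schnorrRandom_of_probOf_le {ω : BitPath} (hω : Computable ω) {b : Bool}
    (hb : ∀ m : ℕ, ∃ n, m ≤ n ∧ ω n = b) {I : Set ℝ} {c : ℝ} (hc : c < 1)
    (hI : ∀ p ∈ I, probOf p b ≤ c) : ¬ SchnorrRandom ω (fun _ => I) := by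
  obtain ⟨G, hG⟩ := exists_nat_probOf_mul_le hc hI
  exact fun h => h _ (computableProcess_bettingProcess ω b G hω)
    ⟨testProcess_bettingProcess ω b G, supermartingale_bettingProcess ω b G hG⟩
    (computablyUnboundedOn_bettingProcess ω b G hω hb)

theorem exists_probOf_le_of_ne_Icc_zero_one {l u : ℝ} (hl : 0 ≤ l) (hu : u ≤ 1)
    (hne : Set.Icc l u ≠ Set.Icc 0 1) :
    ∃ b : Bool, ∃ c < 1, ∀ p ∈ Set.Icc l u, probOf p b ≤ c := by
  rcases hl.lt_or_eq with hl | rfl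
  · refine ⟨false, 1 - l, by linarith, fun p hp => ?_⟩
    simp only [probOf, Bool.false_eq_true, if_false]
    linarith [hp.1]
  · exact ⟨true, u, hu.lt_of_ne fun h => hne (h ▸ rfl), fun p hp => hp.2⟩

theorem Supermartingale.append_le_of_vacuous {T : Situation → ℝ}
    (hT : Supermartingale (fun _ => Set.Icc 0 1) T) (s : Situation) (x : Bool) :
    T (s ++ [x]) ≤ T s := by
  have hx : bval x ∈ Set.Icc (0 : ℝ) 1 := by cases x <;> simp [bval]
  have := (Ep_le_upperExp isCompact_Icc hx _).trans (hT s)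
  rw [Ep_bval] at this
  linarith

theorem TestSupermartingale.boundedAboveOn_of_vacuous {T : Situation → ℝ}
    (hT : TestSupermartingale (fun _ => Set.Icc 0 1) T) (ω : BitPath) : BoundedAboveOn T ω := by
  refine ⟨1, fun n => ?_⟩
  induction n with
  | zero => exact hT.1.2.le
  | succ n ih => rw [pref_succ]; exact (hT.2.append_le_of_vacuous _ _).trans ih

theorem BoundedAboveOn.not_computablyUnboundedOn {T : Situation → ℝ} {ω : BitPath}
    (hB : BoundedAboveOn T ω) : ¬ ComputablyUnboundedOn T ω := by
  rintro ⟨ρ, ⟨-, hmono, hunb⟩, hpos⟩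
  obtain ⟨B, hB⟩ := hB
  obtain ⟨n₀, hn₀⟩ := hunb ⌈B⌉₊
  refine hpos.not_ge (limsup_le_of_le (by isBoundedDefault)
    (eventually_atTop.2 ⟨n₀, fun n hn => EReal.coe_nonpos.2 ?_⟩))
  have : B < ρ n := (Nat.le_ceil B).trans_lt (by exact_mod_cast hn₀.trans_le (hmono hn))
  linarith [hB n]

theorem ComputablyRandom.schnorrRandom {ω : BitPath} {Γ : ForecastingSystem}
    (h : ComputablyRandom ω Γ) : SchnorrRandom ω Γ :=
  fun T hc hT => (h T hc hT).not_computablyUnboundedOn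

theorem computablyRandom_vacuous (ω : BitPath) : ComputablyRandom ω (fun _ => Set.Icc 0 1) :=
  fun _ _ hT => hT.boundedAboveOn_of_vacuous ω

theorem stmt_16 (ω : BitPath) (hω : Computable ω)
    (h0 : ∀ m : ℕ, ∃ n, m ≤ n ∧ ω n = false)
    (h1 : ∀ m : ℕ, ∃ n, m ≤ n ∧ ω n = true) :
    (∀ I : Set ℝ, IsForecast I →
      (SchnorrRandom ω (fun _ => I) ↔ I = Set.Icc 0 1)) ∧
    (∀ I : Set ℝ, IsForecast I →
      (ComputablyRandom ω (fun _ => I) ↔ I = Set.Icc 0 1)) := by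
  have hinf : ∀ b : Bool, ∀ m : ℕ, ∃ n, m ≤ n ∧ ω n = b := by rintro (_ | _); exacts [h0, h1]
  have vacuous_of_schnorr (I : Set ℝ) (hI : IsForecast I) (h : SchnorrRandom ω fun _ => I) :
      I = Set.Icc 0 1 := by
    obtain ⟨l, u, hl, -, hu, rfl⟩ := hI
    by_contra hne
    obtain ⟨b, c, hc, hbc⟩ := exists_probOf_le_of_ne_Icc_zero_one hl hu hne
    exact not_schnorrRandom_of_probOf_le hω (hinf b) hc hbc h
  refine ⟨fun I hI => ⟨vacuous_of_schnorr I hI, ?_⟩,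
    fun I hI => ⟨fun h => vacuous_of_schnorr I hI h.schnorrRandom, ?_⟩⟩
  · rintro rfl; exact (computablyRandom_vacuous ω).schnorrRandom
  · rintro rfl; exact computablyRandom_vacuous ω
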